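/- arXiv:1101.3286 — 3 statements merged into one kernel-verified Lean document; each statement's English description precedes it below -/
import Mathlib

section
/- Let Y be a random variable with E[Y] = 0 and finite second moment σ² := E[Y²]. For all positive reals a, b, one has P(Y ∉ (-a, b)) ≤ (4σ² + (a-b)²)/(a+b)². -/
/-! The interval `(-a, b)` is the ball of radius `(a + b) / 2` about its midpoint `(b - a) / 2`,
so Chebyshev's inequality centred at the midpoint gives
`P(Y ∉ (-a, b)) ≤ E[(Y - (b - a) / 2)²] / ((a + b) / 2)² = (σ² + ((b - a) / 2)²) / ((a + b) / 2)²`. -/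

open MeasureTheory ProbabilityTheory

lemma notMem_Ioo_iff_le_abs_sub_midpoint {x a b : ℝ} :
    x ∉ Set.Ioo (-a) b ↔ (a + b) / 2 ≤ |x - (b - a) / 2| := by
  rw [Set.mem_Ioo, not_and_or, not_lt, not_lt, le_abs']
  constructor <;> rintro (h | h) <;> first | (left; linarith) | (right; linarith)

section

variable {Ω : Type*} {m : MeasurableSpace Ω} {μ : Measure Ω} {X : Ω → ℝ}

lemma measureReal_le_abs_sub_le_integral_sq_div {c t : ℝ} (ht : 0 < t)
    (hX : Integrable (fun ω => (X ω - c) ^ 2) μ) :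
    μ.real {ω | t ≤ |X ω - c|} ≤ (∫ ω, (X ω - c) ^ 2 ∂μ) / t ^ 2 := by
  have hsq : {ω | t ≤ |X ω - c|} = {ω | t ^ 2 ≤ (X ω - c) ^ 2} := by
    ext ω
    simp only [Set.mem_ofPred_eq, ← sq_abs (X ω - c)]
    exact (pow_le_pow_iff_left₀ ht.le (abs_nonneg _) two_ne_zero).symm
  rw [hsq, le_div_iff₀ (by positivity), mul_comm]
  exact mul_meas_ge_le_integral_of_nonneg (ae_of_all _ fun ω => sq_nonneg _) hX _

variable [IsProbabilityMeasure μ]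

lemma integrable_sub_const_sq (hX : Integrable X μ) (hX2 : Integrable (fun ω => X ω ^ 2) μ)
    (c : ℝ) : Integrable (fun ω => (X ω - c) ^ 2) μ :=
  (((memLp_two_iff_integrable_sq hX.1).2 hX2).sub (memLp_const c)).integrable_sq

lemma integral_sub_const_sq (hX : Integrable X μ) (hX2 : Integrable (fun ω => X ω ^ 2) μ)
    (c : ℝ) :
    ∫ ω, (X ω - c) ^ 2 ∂μ = ∫ ω, X ω ^ 2 ∂μ - 2 * c * ∫ ω, X ω ∂μ + c ^ 2 := by
  have hexpand : (fun ω => (X ω - c) ^ 2) = fun ω => (X ω ^ 2 - 2 * c * X ω) + c ^ 2 := by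
    funext ω; ring
  have hlin : Integrable (fun ω => 2 * c * X ω) μ := hX.const_mul _
  have hquad : Integrable (fun ω => X ω ^ 2 - 2 * c * X ω) μ := hX2.sub hlin
  rw [hexpand, integral_add hquad (integrable_const _), integral_sub hX2 hlin,
    integral_const_mul, integral_const, probReal_univ, one_smul]

end

theorem between_chebyshev_cantelli_general
    {Ω : Type*} [MeasureSpace Ω] [IsProbabilityMeasure (ℙ : Measure Ω)]
    (Y : Ω → ℝ)
    (hint : Integrable Y) (hint2 : Integrable (fun ω => (Y ω) ^ 2))
    (hmean : ∫ ω, Y ω = 0)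
    (σ2 : ℝ) (hσ2 : σ2 = ∫ ω, (Y ω) ^ 2)
    (a b : ℝ) (ha : 0 < a) (hb : 0 < b) :
    (ℙ {ω | Y ω ∉ Set.Ioo (-a) b}).toReal ≤ (4 * σ2 + (a - b) ^ 2) / (a + b) ^ 2 := by
  calc (ℙ {ω | Y ω ∉ Set.Ioo (-a) b}).toReal
      = (ℙ : Measure Ω).real {ω | (a + b) / 2 ≤ |Y ω - (b - a) / 2|} := by
        simp only [notMem_Ioo_iff_le_abs_sub_midpoint, measureReal_def]
    _ ≤ (∫ ω, (Y ω - (b - a) / 2) ^ 2) / ((a + b) / 2) ^ 2 :=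
        measureReal_le_abs_sub_le_integral_sq_div (by linarith)
          (integrable_sub_const_sq hint hint2 _)
    _ = (4 * σ2 + (a - b) ^ 2) / (a + b) ^ 2 := by
        rw [integral_sub_const_sq hint hint2, hmean, ← hσ2]
        field_simp
        ring

theorem between_chebyshev_cantelli
    {Ω : Type*} [MeasureSpace Ω] [IsProbabilityMeasure (ℙ : Measure Ω)]
    (Y : Ω → ℝ) (hY : Measurable Y)
    (hint : Integrable Y) (hint2 : Integrable (fun ω => (Y ω) ^ 2))
    (hmean : ∫ ω, Y ω = 0)
    (σ2 : ℝ) (hσ2 : σ2 = ∫ ω, (Y ω) ^ 2)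
    (a b : ℝ) (ha : 0 < a) (hb : 0 < b) :
    (ℙ {ω | Y ω ∉ Set.Ioo (-a) b}).toReal ≤ (4 * σ2 + (a - b) ^ 2) / (a + b) ^ 2 :=
  between_chebyshev_cantelli_general Y hint hint2 hmean σ2 hσ2 a b ha hb
end

section
/- For any positive real numbers x, x₁, x₂ with x ≥ max(x₁, x₂), one has x₁·Ψ(x) ≤ Ψ*(x₂), where Ψ := 1 - Φ is the standard normal tail function and Ψ*(x) := 0.17 for 0 < x < 0.752 and Ψ*(x) := x·Ψ(x) for x ≥ 0.752. -/
noncomputable def stdNormalCDF (x : ℝ) : ℝ :=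
  ∫ t in Set.Iic x, (Real.sqrt (2 * Real.pi))⁻¹ * Real.exp (-t ^ 2 / 2)

noncomputable def Psi (x : ℝ) : ℝ := 1 - stdNormalCDF x

noncomputable def PsiStar (x : ℝ) : ℝ :=
  if x < 0.752 then 0.17 else x * Psi x

/-!
The derivative of `t ↦ t Ψ(t)` is `Ψ(t) - t φ(t)`, which is `≤ 0` for `t ≥ 0.752`: for `t ≥ 1` by
Mills' inequality, and on `[0.752, 1]` because `t φ(t) - Ψ(t)` is increasing on `[-√2, √2]` and
already nonnegative at `0.752`. Hence `x₁ Ψ(x) ≤ x Ψ(x) ≤ x₂ Ψ(x₂)` when `x₂ ≥ 0.752`.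

Otherwise it suffices that `x Ψ(x) ≤ 0.17` for all `x`. The maximum of `x Ψ(x)` is about `0.16997`,
near `0.752`, so this needs some precision: `Ψ` is convex on `[0, ∞)`, so on `[0, 0.7]` and
`[0.7, 0.752]` it lies below its chords, and the values of `Ψ` at the nodes are bounded above by
integrating a degree-12 Taylor lower bound of the Gaussian density.
-/

open MeasureTheory ProbabilityTheory Set Filter Real Topology

local notation "φ" => gaussianPDFReal 0 1

lemma gaussianPDFReal_zero_one (t : ℝ) : φ t = (√(2 * π))⁻¹ * exp (-t ^ 2 / 2) := by
  simp [gaussianPDFReal]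

lemma stdNormalCDF_eq_integral (x : ℝ) : stdNormalCDF x = ∫ t in Iic x, φ t := by
  simp only [stdNormalCDF, gaussianPDFReal_zero_one]

lemma integral_Iic_add_integral_Ioi_gaussianPDFReal (x : ℝ) :
    (∫ t in Iic x, φ t) + ∫ t in Ioi x, φ t = 1 := by
  rw [← integral_gaussianPDFReal_eq_one 0 one_ne_zero, ← compl_Iic]
  exact integral_add_compl measurableSet_Iic (integrable_gaussianPDFReal 0 1)

lemma Psi_eq_integral_Ioi (x : ℝ) : Psi x = ∫ t in Ioi x, φ t := by
  rw [Psi, stdNormalCDF_eq_integral]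
  linarith [integral_Iic_add_integral_Ioi_gaussianPDFReal x]

lemma Psi_nonneg (x : ℝ) : 0 ≤ Psi x := by
  rw [Psi_eq_integral_Ioi]
  exact setIntegral_nonneg measurableSet_Ioi fun t _ => gaussianPDFReal_nonneg 0 1 t

lemma Psi_zero : Psi 0 = 1 / 2 := by
  have hsymm : ∫ t in Iic (0 : ℝ), φ t = ∫ t in Ioi (0 : ℝ), φ t := by
    simpa [gaussianPDFReal_zero_one] using integral_comp_neg_Iic (0 : ℝ) φ
  rw [Psi_eq_integral_Ioi]
  linarith [integral_Iic_add_integral_Ioi_gaussianPDFReal 0]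

lemma Psi_eq_half_sub_intervalIntegral (x : ℝ) : Psi x = 1 / 2 - ∫ t in (0 : ℝ)..x, φ t := by
  have hφ := integrable_gaussianPDFReal 0 1
  rw [← Psi_zero, ← intervalIntegral.integral_Iic_sub_Iic hφ.integrableOn hφ.integrableOn,
    ← stdNormalCDF_eq_integral, ← stdNormalCDF_eq_integral, Psi, Psi]
  ring

lemma continuous_gaussianPDFReal_zero_one : Continuous φ := by
  simp only [gaussianPDFReal_def]; fun_prop

lemma hasDerivAt_Psi (x : ℝ) : HasDerivAt Psi (-φ x) x := by
  rw [funext Psi_eq_half_sub_intervalIntegral]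
  exact (intervalIntegral.integral_hasDerivAt_right
    (integrable_gaussianPDFReal 0 1).intervalIntegrable
    (continuous_gaussianPDFReal_zero_one.stronglyMeasurableAtFilter _ _)
    continuous_gaussianPDFReal_zero_one.continuousAt).const_sub _

lemma hasDerivAt_gaussianPDFReal_zero_one (t : ℝ) : HasDerivAt φ (-t * φ t) t := by
  have hexponent : HasDerivAt (fun s : ℝ => -s ^ 2 / 2) (-t) t :=
    ((hasDerivAt_pow 2 t).fun_neg.div_const 2).congr_deriv (by norm_num; ring)
  rw [funext gaussianPDFReal_zero_one]
  exact (hexponent.exp.const_mul (√(2 * π))⁻¹).congr_deriv (by ring)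

lemma tendsto_gaussianPDFReal_zero_one_atTop : Tendsto φ atTop (𝓝 0) := by
  have hexponent : Tendsto (fun t : ℝ => -t ^ 2 / 2) atTop atBot :=
    (tendsto_neg_atTop_atBot.comp (tendsto_pow_atTop two_ne_zero)).atBot_div_const two_pos
  simpa [funext gaussianPDFReal_zero_one] using
    (tendsto_exp_atBot.comp hexponent).const_mul (√(2 * π))⁻¹

lemma integrable_mul_gaussianPDFReal_zero_one : Integrable fun t => t * φ t := by
  convert (integrable_mul_exp_neg_mul_sq (b := 1 / 2) (by norm_num)).const_mul (√(2 * π))⁻¹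
    using 2 with t
  rw [gaussianPDFReal_zero_one]; ring_nf

lemma integral_Ioi_mul_gaussianPDFReal_zero_one (x : ℝ) : ∫ t in Ioi x, t * φ t = φ x := by
  have h := integral_Ioi_of_hasDerivAt_of_tendsto' (a := x) (f := fun t => -φ t)
    (f' := fun t => t * φ t)
    (fun t _ => (hasDerivAt_gaussianPDFReal_zero_one t).neg.congr_deriv (by ring))
    integrable_mul_gaussianPDFReal_zero_one.integrableOn
    (by simpa using tendsto_gaussianPDFReal_zero_one_atTop.neg)
  simpa using h

-- Mills' inequality `Ψ(x) ≤ φ(x) / x`, cleared of the denominator.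
lemma mul_Psi_le_gaussianPDFReal (x : ℝ) : x * Psi x ≤ φ x := by
  rw [Psi_eq_integral_Ioi, ← integral_const_mul, ← integral_Ioi_mul_gaussianPDFReal_zero_one]
  refine setIntegral_mono_on ((integrable_gaussianPDFReal 0 1).const_mul x).integrableOn
    integrable_mul_gaussianPDFReal_zero_one.integrableOn measurableSet_Ioi fun t ht => ?_
  exact mul_le_mul_of_nonneg_right (le_of_lt ht) (gaussianPDFReal_nonneg 0 1 t)

lemma gaussianPDFReal_zero_one_le {s t : ℝ} (hs : 0 ≤ s) (hst : s ≤ t) : φ t ≤ φ s := by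
  rw [gaussianPDFReal_zero_one, gaussianPDFReal_zero_one]
  gcongr

lemma convexOn_Psi : ConvexOn ℝ (Ici 0) Psi := by
  refine MonotoneOn.convexOn_of_deriv (convex_Ici 0)
    (fun x _ => (hasDerivAt_Psi x).continuousAt.continuousWithinAt)
    (fun x _ => (hasDerivAt_Psi x).differentiableAt.differentiableWithinAt) ?_
  intro s hs t _ hst
  rw [interior_Ici, mem_Ioi] at hs
  simpa only [(hasDerivAt_Psi _).deriv, neg_le_neg_iff] using
    gaussianPDFReal_zero_one_le hs.le hst

lemma ConvexOn.sub_mul_le_chord {s : Set ℝ} {f : ℝ → ℝ} (hf : ConvexOn ℝ s f) {a b x : ℝ}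
    (ha : a ∈ s) (hb : b ∈ s) (hax : a ≤ x) (hxb : x ≤ b) :
    (b - a) * f x ≤ (b - x) * f a + (x - a) * f b := by
  rcases hax.eq_or_lt with rfl | hax
  · exact le_of_eq (by ring)
  rcases hxb.eq_or_lt with rfl | hxb
  · exact le_of_eq (by ring)
  exact hf.secant_mono_aux1 ha hb hax hxb

-- With `r = b pa - a pb` and `s = pa - pb`, the chord gives `(b - a) f x ≤ r - s x`, and
-- `4 s x (r - s x) ≤ r ^ 2`.
lemma ConvexOn.mul_le_of_chord {f : ℝ → ℝ} {a b pa pb c x : ℝ} (hf : ConvexOn ℝ (Icc a b) f)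
    (ha : 0 ≤ a) (hab : a < b) (hfa : f a ≤ pa) (hfb : f b ≤ pb) (hp : pb < pa)
    (hc : (b * pa - a * pb) ^ 2 ≤ 4 * (pa - pb) * (b - a) * c) (hx : x ∈ Icc a b) :
    x * f x ≤ c := by
  obtain ⟨hax, hxb⟩ := hx
  have hchord := hf.sub_mul_le_chord (left_mem_Icc.2 hab.le) (right_mem_Icc.2 hab.le) hax hxb
  have hlin : (b - a) * f x ≤ (b * pa - a * pb) - (pa - pb) * x := by nlinarith
  have hscaled : 4 * (pa - pb) * (b - a) * (x * f x) ≤ 4 * (pa - pb) * (b - a) * c := by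
    have hsx : 0 ≤ 4 * (pa - pb) * x := mul_nonneg (by linarith) (by linarith)
    nlinarith [mul_le_mul_of_nonneg_left hlin hsx, sq_nonneg (b * pa - a * pb - 2 * (pa - pb) * x)]
  exact le_of_mul_le_mul_left hscaled (by nlinarith)

lemma exp_neg_ge_taylor {u : ℝ} (h0 : 0 ≤ u) (h1 : u ≤ 1) :
    1 - u + u ^ 2 / 2 - u ^ 3 / 6 + u ^ 4 / 24 - u ^ 5 / 120 - 7 * u ^ 6 / 4320 ≤ exp (-u) := by
  have h := (abs_le.1 (exp_bound (x := -u) (by rwa [abs_neg, abs_of_nonneg h0]) (n := 6)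
    (by norm_num))).1
  simp only [Finset.sum_range_succ, Finset.sum_range_zero, abs_neg, abs_of_nonneg h0,
    Nat.factorial] at h
  norm_num at h
  linarith

lemma gaussianPDFReal_zero_one_ge_taylor {t : ℝ} (ht : t ^ 2 ≤ 2) :
    0.3989422 * (1 - t ^ 2 / 2 + t ^ 4 / 8 - t ^ 6 / 48 + t ^ 8 / 384 - t ^ 10 / 3840
      - 7 * t ^ 12 / 276480) ≤ φ t := by
  have hexp := exp_neg_ge_taylor (u := t ^ 2 / 2) (by positivity) (by linarith)
  have hconst : (0.3989422 : ℝ) ≤ (√(2 * π))⁻¹ := by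
    rw [le_inv_comm₀ (by norm_num) (by positivity), sqrt_le_left (by positivity)]
    nlinarith [pi_lt_d6]
  rw [gaussianPDFReal_zero_one, neg_div]
  calc _ = 0.3989422 * (1 - t ^ 2 / 2 + (t ^ 2 / 2) ^ 2 / 2 - (t ^ 2 / 2) ^ 3 / 6
        + (t ^ 2 / 2) ^ 4 / 24 - (t ^ 2 / 2) ^ 5 / 120 - 7 * (t ^ 2 / 2) ^ 6 / 4320) := by ring
    _ ≤ 0.3989422 * exp (-(t ^ 2 / 2)) := by gcongr
    _ ≤ (√(2 * π))⁻¹ * exp (-(t ^ 2 / 2)) := by gcongr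

-- `1 / 2` minus the integral over `[0, a]` of the lower bound `gaussianPDFReal_zero_one_ge_taylor`.
noncomputable def psiUpper (a : ℝ) : ℝ :=
  1 / 2 - 0.3989422 * (a - a ^ 3 / 6 + a ^ 5 / 40 - a ^ 7 / 336 + a ^ 9 / 3456
    - a ^ 11 / 42240 - 7 * a ^ 13 / 3594240)

lemma Psi_le_psiUpper {a : ℝ} (ha : 0 ≤ a) (ha2 : a ^ 2 ≤ 2) : Psi a ≤ psiUpper a := by
  have hint : ∫ t in (0 : ℝ)..a, 0.3989422 * (1 - t ^ 2 / 2 + t ^ 4 / 8 - t ^ 6 / 48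
      + t ^ 8 / 384 - t ^ 10 / 3840 - 7 * t ^ 12 / 276480) ≤ ∫ t in (0 : ℝ)..a, φ t :=
    intervalIntegral.integral_mono_on ha (Continuous.intervalIntegrable (by fun_prop) _ _)
      (integrable_gaussianPDFReal 0 1).intervalIntegrable fun t ht =>
        gaussianPDFReal_zero_one_ge_taylor (by nlinarith [ht.1, ht.2])
  simp (disch := exact Continuous.intervalIntegrable (by fun_prop) _ _) only
    [intervalIntegral.integral_sub, intervalIntegral.integral_add, integral_pow,
      intervalIntegral.integral_div, intervalIntegral.integral_const_mul,
      intervalIntegral.integral_const] at hint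
  rw [Psi_eq_half_sub_intervalIntegral, psiUpper]
  norm_num at hint
  linarith

lemma monotoneOn_mul_gaussianPDFReal_sub_Psi :
    MonotoneOn (fun t => t * φ t - Psi t) (Icc (-√2) √2) := by
  have hderiv (t : ℝ) : HasDerivAt (fun t => t * φ t - Psi t) ((2 - t ^ 2) * φ t) t :=
    (((hasDerivAt_id t).mul (hasDerivAt_gaussianPDFReal_zero_one t)).sub
      (hasDerivAt_Psi t)).congr_deriv (by simp only [id_eq]; ring)
  refine monotoneOn_of_deriv_nonneg (convex_Icc _ _)
    (fun t _ => (hderiv t).continuousAt.continuousWithinAt)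
    (fun t _ => (hderiv t).differentiableAt.differentiableWithinAt) fun t ht => ?_
  rw [interior_Icc] at ht
  rw [(hderiv t).deriv]
  have hsq : t ^ 2 ≤ 2 := by nlinarith [sq_sqrt (zero_le_two : (0 : ℝ) ≤ 2), ht.1, ht.2]
  exact mul_nonneg (by linarith) (gaussianPDFReal_nonneg 0 1 t)

lemma Psi_le_mul_gaussianPDFReal {t : ℝ} (ht : 0.752 ≤ t) : Psi t ≤ t * φ t := by
  rcases le_total t 1 with ht1 | ht1
  · have hmono := monotoneOn_mul_gaussianPDFReal_sub_Psi
      ⟨by linarith [sqrt_nonneg 2], by linarith [one_lt_sqrt_two]⟩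
      ⟨by linarith [sqrt_nonneg 2], by linarith [one_lt_sqrt_two]⟩ ht
    have hpdf := gaussianPDFReal_zero_one_ge_taylor (t := 0.752) (by norm_num)
    have hPsi := Psi_le_psiUpper (a := 0.752) (by norm_num) (by norm_num)
    norm_num [psiUpper] at hmono hpdf hPsi ⊢
    linarith
  · have hmills := mul_Psi_le_gaussianPDFReal t
    have hpdf := gaussianPDFReal_nonneg 0 1 t
    nlinarith [mul_le_mul_of_nonneg_right (one_le_mul_of_one_le_of_one_le ht1 ht1) hpdf]

lemma antitoneOn_mul_Psi : AntitoneOn (fun t => t * Psi t) (Ici 0.752) := by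
  have hderiv (t : ℝ) : HasDerivAt (fun t => t * Psi t) (Psi t - t * φ t) t :=
    ((hasDerivAt_id t).mul (hasDerivAt_Psi t)).congr_deriv (by simp only [id_eq]; ring)
  refine antitoneOn_of_deriv_nonpos (convex_Ici _)
    (fun t _ => (hderiv t).continuousAt.continuousWithinAt)
    (fun t _ => (hderiv t).differentiableAt.differentiableWithinAt) fun t ht => ?_
  rw [interior_Ici] at ht
  rw [(hderiv t).deriv, sub_nonpos]
  exact Psi_le_mul_gaussianPDFReal (le_of_lt ht)

lemma mul_Psi_le (x : ℝ) : x * Psi x ≤ 0.17 := by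
  have hconvex (a b : ℝ) (ha : 0 ≤ a) : ConvexOn ℝ (Icc a b) Psi :=
    convexOn_Psi.subset (fun t ht => le_trans ha ht.1) (convex_Icc a b)
  rcases le_total x 0 with hx | hx
  · linarith [mul_nonpos_of_nonpos_of_nonneg hx (Psi_nonneg x)]
  rcases le_total x 0.7 with hx1 | hx1
  · exact (hconvex 0 0.7 le_rfl).mul_le_of_chord le_rfl (by norm_num) (Psi_zero.le)
      (Psi_le_psiUpper (by norm_num) (by norm_num)) (by norm_num [psiUpper])
      (by norm_num [psiUpper]) ⟨hx, hx1⟩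
  rcases le_total x 0.752 with hx2 | hx2
  · exact (hconvex 0.7 0.752 (by norm_num)).mul_le_of_chord (by norm_num) (by norm_num)
      (Psi_le_psiUpper (by norm_num) (by norm_num)) (Psi_le_psiUpper (by norm_num) (by norm_num))
      (by norm_num [psiUpper]) (by norm_num [psiUpper]) ⟨hx1, hx2⟩
  calc x * Psi x ≤ 0.752 * Psi 0.752 := antitoneOn_mul_Psi self_mem_Ici hx2 hx2
    _ ≤ 0.752 * psiUpper 0.752 := by gcongr; exact Psi_le_psiUpper (by norm_num) (by norm_num)
    _ ≤ 0.17 := by norm_num [psiUpper]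

theorem lemma2_tail_bound_general (x x₁ x₂ : ℝ)
    (h : x ≥ max x₁ x₂) : x₁ * Psi x ≤ PsiStar x₂ := by
  obtain ⟨hx₁, hx₂⟩ := max_le_iff.mp h
  have hx₁x : x₁ * Psi x ≤ x * Psi x := mul_le_mul_of_nonneg_right hx₁ (Psi_nonneg x)
  unfold PsiStar
  split_ifs with hsmall
  · exact hx₁x.trans (mul_Psi_le x)
  · have hlarge : 0.752 ≤ x₂ := not_lt.mp hsmall
    exact hx₁x.trans (antitoneOn_mul_Psi hlarge (hlarge.trans hx₂) hx₂)

theorem lemma2_tail_bound (x x₁ x₂ : ℝ) (hx : 0 < x) (hx₁ : 0 < x₁) (hx₂ : 0 < x₂)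
    (h : x ≥ max x₁ x₂) : x₁ * Psi x ≤ PsiStar x₂ :=
  lemma2_tail_bound_general x x₁ x₂ h
end

section
/- The function Ψ := 1 - Φ, where Φ is the standard normal distribution function, is log-concave on ℝ; equivalently, the function x ↦ ln(1 - Φ(x)) is concave. -/
open MeasureTheory Real Set Filter Topology

theorem concaveOn_univ_log_of_mul_deriv2_le_sq {f f' f'' : ℝ → ℝ}
    (hf : ∀ x, HasDerivAt f (f' x) x) (hf' : ∀ x, HasDerivAt f' (f'' x) x)
    (hpos : ∀ x, 0 < f x) (hle : ∀ x, f x * f'' x ≤ f' x ^ 2) :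
    ConcaveOn ℝ univ (fun x => log (f x)) := by
  have hlog : ∀ x, HasDerivAt (fun y => log (f y)) (f' x / f x) x :=
    fun x => (hf x).log (hpos x).ne'
  have hlog' : ∀ x, HasDerivAt (fun y => f' y / f y)
      ((f'' x * f x - f' x ^ 2) / f x ^ 2) x := fun x =>
    ((hf' x).div (hf x) (hpos x).ne').congr_deriv (by ring)
  have hderiv : deriv (fun y => log (f y)) = fun y => f' y / f y :=
    funext fun x => (hlog x).deriv
  apply concaveOn_univ_of_deriv2_nonpos (fun x => (hlog x).differentiableAt)
  · rw [hderiv]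
    exact fun x => (hlog' x).differentiableAt
  · intro x
    rw [Function.iterate_succ_apply, Function.iterate_one, hderiv, (hlog' x).deriv]
    exact div_nonpos_of_nonpos_of_nonneg (by linarith [hle x]) (sq_nonneg _)

noncomputable def stdNormalPDF (t : ℝ) : ℝ := (√(2 * π))⁻¹ * exp (-t ^ 2 / 2)

noncomputable def stdNormalTail (x : ℝ) : ℝ := ∫ t in Ioi x, stdNormalPDF t

lemma stdNormalPDF_eq (t : ℝ) : stdNormalPDF t = (√(2 * π))⁻¹ * exp (-(1 / 2) * t ^ 2) := by
  rw [stdNormalPDF]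
  ring_nf

lemma stdNormalPDF_pos (t : ℝ) : 0 < stdNormalPDF t := by
  unfold stdNormalPDF
  positivity

lemma continuous_stdNormalPDF : Continuous stdNormalPDF := by
  unfold stdNormalPDF
  fun_prop

lemma hasDerivAt_stdNormalPDF (t : ℝ) : HasDerivAt stdNormalPDF (-t * stdNormalPDF t) t := by
  have hexp : HasDerivAt (fun t : ℝ => -t ^ 2 / 2) (-t) t := by
    simpa using ((hasDerivAt_pow 2 t).neg.div_const 2).congr_deriv (by ring)
  exact (hexp.exp.const_mul _).congr_deriv (by rw [stdNormalPDF]; ring)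

lemma integrable_stdNormalPDF : Integrable stdNormalPDF := by
  simp_rw [funext stdNormalPDF_eq]
  exact (integrable_exp_neg_mul_sq (by norm_num)).const_mul _

lemma integrable_mul_stdNormalPDF : Integrable (fun t => t * stdNormalPDF t) := by
  simp_rw [stdNormalPDF_eq, mul_left_comm _ (√(2 * π))⁻¹]
  exact (integrable_mul_exp_neg_mul_sq (by norm_num)).const_mul _

lemma integral_stdNormalPDF : ∫ t, stdNormalPDF t = 1 := by
  simp_rw [stdNormalPDF_eq]
  rw [integral_const_mul, integral_gaussian, show π / (1 / 2) = 2 * π by ring]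
  exact inv_mul_cancel₀ (by positivity)

lemma tendsto_stdNormalPDF_atTop : Tendsto stdNormalPDF atTop (𝓝 0) := by
  simp_rw [funext stdNormalPDF_eq]
  simpa using (tendsto_exp_atBot.comp
    (tendsto_neg_const_mul_pow_atTop two_ne_zero (by norm_num : -(1 / 2 : ℝ) < 0))).const_mul
    (√(2 * π))⁻¹

lemma one_sub_stdNormalCDF (x : ℝ) : 1 - stdNormalCDF x = stdNormalTail x := by
  have h := integral_add_compl (measurableSet_Iic (a := x)) integrable_stdNormalPDF
  rw [compl_Iic, integral_stdNormalPDF] at h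
  rw [stdNormalTail, ← h]
  exact add_sub_cancel_left _ _

lemma stdNormalTail_pos (x : ℝ) : 0 < stdNormalTail x := by
  rw [stdNormalTail, setIntegral_pos_iff_support_of_nonneg_ae
    (.of_forall fun t => (stdNormalPDF_pos t).le) integrable_stdNormalPDF.integrableOn,
    Function.support_eq_univ fun t => (stdNormalPDF_pos t).ne', univ_inter]
  simp

lemma hasDerivAt_stdNormalCDF (x : ℝ) : HasDerivAt stdNormalCDF (stdNormalPDF x) x := by
  have hcdf : stdNormalCDF = fun y => stdNormalCDF 0 + ∫ t in (0 : ℝ)..y, stdNormalPDF t := by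
    funext y
    rw [← intervalIntegral.integral_Iic_sub_Iic integrable_stdNormalPDF.integrableOn
      integrable_stdNormalPDF.integrableOn]
    exact (add_sub_cancel _ _).symm
  rw [hcdf]
  exact (intervalIntegral.integral_hasDerivAt_right integrable_stdNormalPDF.intervalIntegrable
    continuous_stdNormalPDF.aestronglyMeasurable.stronglyMeasurableAtFilter
    continuous_stdNormalPDF.continuousAt).const_add _

lemma hasDerivAt_stdNormalTail (x : ℝ) : HasDerivAt stdNormalTail (-stdNormalPDF x) x := by
  rw [← funext one_sub_stdNormalCDF]
  simpa using (hasDerivAt_stdNormalCDF x).const_sub 1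

lemma integral_Ioi_mul_stdNormalPDF (x : ℝ) :
    ∫ t in Ioi x, t * stdNormalPDF t = stdNormalPDF x := by
  rw [integral_Ioi_of_hasDerivAt_of_tendsto' (f := fun t => -stdNormalPDF t) (m := 0)
    (fun t _ => (hasDerivAt_stdNormalPDF t).neg.congr_deriv (by ring))
    integrable_mul_stdNormalPDF.integrableOn (by simpa using tendsto_stdNormalPDF_atTop.neg)]
  ring

theorem mul_stdNormalTail_le_stdNormalPDF (x : ℝ) : x * stdNormalTail x ≤ stdNormalPDF x := by
  rcases le_or_gt x 0 with hx | hx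
  · exact (mul_nonpos_of_nonpos_of_nonneg hx (stdNormalTail_pos x).le).trans
      (stdNormalPDF_pos x).le
  · rw [stdNormalTail, ← integral_const_mul, ← integral_Ioi_mul_stdNormalPDF x]
    exact setIntegral_mono_on (integrable_stdNormalPDF.const_mul x).integrableOn
      integrable_mul_stdNormalPDF.integrableOn measurableSet_Ioi
      fun t ht => mul_le_mul_of_nonneg_right (le_of_lt ht) (stdNormalPDF_pos t).le

theorem normal_tail_log_concave :
    ConcaveOn ℝ Set.univ (fun x : ℝ => Real.log (1 - stdNormalCDF x)) := by
  simp_rw [one_sub_stdNormalCDF]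
  refine concaveOn_univ_log_of_mul_deriv2_le_sq hasDerivAt_stdNormalTail
    (f'' := fun x => x * stdNormalPDF x)
    (fun x => (hasDerivAt_stdNormalPDF x).neg.congr_deriv (by ring)) stdNormalTail_pos
    fun x => ?_
  nlinarith [mul_stdNormalTail_le_stdNormalPDF x, stdNormalPDF_pos x]
end
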